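/- arXiv:2309.10797 — 7 statements merged into one kernel-verified Lean document; each statement's English description precedes it below -/
import Mathlib

section
/- Let x be a sequence over a finite alphabet that is not eventually σ-periodic and let ε = 2^{-g} for some g ∈ ℕ. Then the infinite symbolic recurrence plot R(x,∞,ε) contains diagonal lines of arbitrarily large finite length: for every ℓ ∈ ℕ there exist i ≠ j and ℓ' ≥ ℓ such that x_{i+h} = x_{j+h} for all 0 ≤ h < ℓ' + g - 1, and this block of agreement is maximal (cannot be extended on either side subject to boundary). -/
private lemma aux_left {A : Type*} (x : ℕ → A) :
    ∀ i j m : ℕ, i < j → (∀ h, h < m → x (i + h) = x (j + h)) → x (i + m) ≠ x (j + m) →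
    ∃ i' j' m' : ℕ, i' < j' ∧ m ≤ m' ∧ (∀ h, h < m' → x (i' + h) = x (j' + h)) ∧
      (0 < i' → 0 < j' → x (i' - 1) ≠ x (j' - 1)) ∧ x (i' + m') ≠ x (j' + m') := by
  intro i
  induction i using Nat.strong_induction_on with
  | _ i ih =>
    intro j m hij hagree hne
    rcases Nat.eq_zero_or_pos i with hi0 | hi0
    · exact ⟨i, j, m, hij, le_rfl, hagree, fun h _ => absurd h (by omega), hne⟩
    · by_cases hprev : x (i - 1) = x (j - 1)
      · have := ih (i - 1) (by omega) (j - 1) (m + 1) (by omega)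
          (fun h hh => by
            rcases Nat.eq_zero_or_pos h with h0 | h0
            · simpa [h0] using hprev
            · have : x (i + (h - 1)) = x (j + (h - 1)) := hagree (h - 1) (by omega)
              have e1 : i - 1 + h = i + (h - 1) := by omega
              have e2 : j - 1 + h = j + (h - 1) := by omega
              rw [e1, e2]; exact this)
          (by
            have e1 : i - 1 + (m + 1) = i + m := by omega
            have e2 : j - 1 + (m + 1) = j + m := by omega
            rw [e1, e2]; exact hne)
        obtain ⟨i', j', m', h1, h2, h3, h4, h5⟩ := this
        exact ⟨i', j', m', h1, by omega, h3, h4, h5⟩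
      · exact ⟨i, j, m, hij, le_rfl, hagree, fun _ _ => hprev, hne⟩

/-- If `x` (over a finite alphabet) is not eventually σ-periodic and
`ε = 2^{-g}` with `g ∈ ℕ`, then the recurrence plot `R(x,∞,ε)` contains diagonal lines of
arbitrarily large finite length: for every `ℓ` there are `i ≠ j` and `ℓ' ≥ ℓ` such that
`x (i+h) = x (j+h)` for all `h < ℓ' + g - 1`, and this agreement block is maximal on both
sides (subject to the boundary on the left). -/
theorem stmt_2 {A : Type*} [Fintype A] (x : ℕ → A) (g : ℕ) (hg : 0 < g)
    (hnp : ¬ ∃ h p : ℕ, 0 < p ∧ ∀ n, h ≤ n → x (n + p) = x n) :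
    ∀ ℓ : ℕ, ∃ i j ℓ' : ℕ, i ≠ j ∧ ℓ ≤ ℓ' ∧
      (∀ h, h < ℓ' + g - 1 → x (i + h) = x (j + h)) ∧
      (0 < i → 0 < j → x (i - 1) ≠ x (j - 1)) ∧
      x (i + ℓ' + g - 1) ≠ x (j + ℓ' + g - 1) := by
  intro ℓ
  set L := ℓ + g - 1 with hL
  -- pigeonhole: two positions with the same length-L word
  obtain ⟨a, b, hab, hword⟩ :
      ∃ a b : ℕ, a ≠ b ∧ (fun h : Fin L => x (a + h)) = (fun h : Fin L => x (b + h)) :=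
    Finite.exists_ne_map_eq_of_infinite (fun n : ℕ => fun h : Fin L => x (n + h))
  -- wlog a < b
  obtain ⟨i, j, hij, hagreeL⟩ :
      ∃ i j : ℕ, i < j ∧ ∀ h, h < L → x (i + h) = x (j + h) := by
    rcases lt_or_gt_of_ne hab with h | h
    · exact ⟨a, b, h, fun k hk => congrFun hword ⟨k, hk⟩⟩
    · exact ⟨b, a, h, fun k hk => (congrFun hword ⟨k, hk⟩).symm⟩
  -- find the first disagreement after the block
  have hex : ∃ n, x (i + n) ≠ x (j + n) := by
    by_contra hc
    push_neg at hc
    exact hnp ⟨i, j - i, by omega, fun n hn => by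
      have := (hc (n - i)).symm
      have e1 : i + (n - i) = n := by omega
      have e2 : j + (n - i) = n + (j - i) := by omega
      rw [e1, e2] at this; exact this⟩
  classical
  set m := Nat.find hex with hm
  have hmne : x (i + m) ≠ x (j + m) := Nat.find_spec hex
  have hmagree : ∀ h, h < m → x (i + h) = x (j + h) := fun h hh => by
    have := Nat.find_min hex hh
    simpa using this
  have hmL : L ≤ m := by
    by_contra hc
    exact hmne (hagreeL m (by omega))
  obtain ⟨i', j', m', h1, h2, h3, h4, h5⟩ := aux_left x i j m hij hmagree hmne
  refine ⟨i', j', m' + 1 - g, by omega, by omega, ?_, h4, ?_⟩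
  · intro h hh
    exact h3 h (by omega)
  · have e : ∀ k, k + (m' + 1 - g) + g - 1 = k + m' := by intro k; omega
    rw [e, e]; exact h5
end

section
/- Let x ∈ {0,1}^ℕ₀ be a binary sequence that is not eventually σ-periodic. Then the infinite symbolic recurrence plot R(x,∞,1/2) contains infinitely many diagonal lines of length 1; i.e., there exist infinitely many pairs (i,j) with i,j ≥ 1, x_i = x_j, x_{i-1} ≠ x_{j-1}, and x_{i+1} ≠ x_{j+1}. -/
/-- If a binary sequence `x` is not eventually σ-periodic, then the infinite
symbolic recurrence plot `R(x,∞,1/2)` contains infinitely many diagonal lines of length 1: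
infinitely many pairs `(i,j)` with `i,j ≥ 1`, `x i = x j`, `x (i-1) ≠ x (j-1)` and
`x (i+1) ≠ x (j+1)`. -/
theorem stmt_3 (x : ℕ → Bool)
    (hnp : ¬ ∃ h p : ℕ, 0 < p ∧ ∀ n, h ≤ n → x (n + p) = x n) :
    {ij : ℕ × ℕ | 1 ≤ ij.1 ∧ 1 ≤ ij.2 ∧ x ij.1 = x ij.2 ∧
      x (ij.1 - 1) ≠ x (ij.2 - 1) ∧ x (ij.1 + 1) ≠ x (ij.2 + 1)}.Infinite := by
  -- infinitely many flips
  have hflip : ∀ N, ∃ m, N ≤ m ∧ x m ≠ x (m + 1) := by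
    intro N
    by_contra h
    push_neg at h
    exact hnp ⟨N, 1, one_pos, fun n hn => (h n hn).symm⟩
  -- infinitely many stays
  have hstay : ∀ N, ∃ m, N ≤ m ∧ x m = x (m + 1) := by
    intro N
    by_contra h
    push_neg at h
    refine hnp ⟨N, 2, by norm_num, fun n hn => ?_⟩
    have h1 := h n hn
    have h2 := h (n + 1) (le_trans hn (Nat.le_succ n))
    have : n + 1 + 1 = n + 2 := rfl
    rw [this] at h2
    revert h1 h2
    cases x n <;> cases x (n + 1) <;> cases x (n + 2) <;> simp
  -- main claim: arbitrarily large second coordinates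
  have main : ∀ N, ∃ i j : ℕ, 1 ≤ i ∧ 1 ≤ j ∧ N ≤ j ∧ x i = x j ∧
      x (i - 1) ≠ x (j - 1) ∧ x (i + 1) ≠ x (j + 1) := by
    intro N
    obtain ⟨f, _, hf⟩ := hflip 0
    obtain ⟨n, hnN, hn⟩ := hstay (max N (f + 2))
    have hNn : N ≤ n := le_trans (le_max_left _ _) hnN
    have hfn : f + 2 ≤ n := le_trans (le_max_right _ _) hnN
    -- least flip position ≥ n + 1
    have hex : ∃ k, x (n + 1 + k) ≠ x (n + 1 + k + 1) := by
      obtain ⟨m, hm1, hm2⟩ := hflip (n + 1)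
      exact ⟨m - (n + 1), by rwa [Nat.add_sub_cancel' hm1]⟩
    classical
    set kf := Nat.find hex with hkf
    set j := n + 1 + kf with hj
    have hjflip : x j ≠ x (j + 1) := Nat.find_spec hex
    have hjmin : ∀ k, k < kf → x (n + 1 + k) = x (n + 1 + k + 1) := by
      intro k hk
      have := Nat.find_min hex hk
      simpa using this
    -- greatest m ≤ n with x (m-1) ≠ x m
    set P : ℕ → Prop := fun m => x (m - 1) ≠ x m with hP
    have hPf : P (f + 1) := by simpa [hP] using hf
    set i := Nat.findGreatest P n with hi
    have hPi : P i := Nat.findGreatest_spec (by omega) hPf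
    have hin : i ≤ n := Nat.findGreatest_le n
    have hi1 : 1 ≤ i := by
      rcases Nat.eq_zero_or_pos i with h0 | h
      · exfalso; rw [h0] at hPi; exact hPi rfl
      · exact h
    have himax : ∀ k, i < k → k ≤ n → x (k - 1) = x k := by
      intro k hik hkn
      have := Nat.findGreatest_is_greatest hik hkn
      simpa [hP] using not_not.mp this
    -- x is constant on [i, j]
    have hconst : ∀ k, i ≤ k → k ≤ j → x k = x i := by
      intro k hik hkj
      induction k with
      | zero => omega
      | succ m ih =>
        rcases Nat.lt_or_ge i (m + 1) with hlt | hge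
        · have him : i ≤ m := by omega
          have ihm : x m = x i := ih him (by omega)
          rcases Nat.lt_or_ge n (m + 1) with h1 | h2
          · -- m + 1 > n : use hn or hjmin
            rcases Nat.eq_or_lt_of_le h1 with heq | h3
            · rw [← ihm]
              have : m = n := by omega
              rw [this]; exact hn.symm
            · -- m ≥ n + 1, m < j so m = n + 1 + k with k < kf
              have hm : m = n + 1 + (m - (n + 1)) := by omega
              have hk : m - (n + 1) < kf := by omega
              have := hjmin _ hk
              rw [← hm] at this
              rw [← ihm, ← this]
          · have := himax (m + 1) hlt h2
            simp only [Nat.add_sub_cancel] at this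
            rw [← this, ihm]
        · have : i = m + 1 := by omega
          rw [this]
    refine ⟨i, j, hi1, by omega, by omega, ?_, ?_, ?_⟩
    · exact (hconst j (by omega) le_rfl).symm
    · have h1 : x (j - 1) = x i := hconst (j - 1) (by omega) (by omega)
      rw [h1]
      exact hPi
    · have h1 : x (i + 1) = x i := hconst (i + 1) (by omega) (by omega)
      have h2 : x j = x i := hconst j (by omega) le_rfl
      rw [h1, ← h2]
      exact hjflip
  -- conclude infiniteness
  intro hfin
  obtain ⟨b, hb⟩ := (hfin.image Prod.snd).bddAbove
  obtain ⟨i, j, h1, h2, h3, h4, h5, h6⟩ := main (b + 1)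
  have : j ∈ Prod.snd '' {ij : ℕ × ℕ | 1 ≤ ij.1 ∧ 1 ≤ ij.2 ∧ x ij.1 = x ij.2 ∧
      x (ij.1 - 1) ≠ x (ij.2 - 1) ∧ x (ij.1 + 1) ≠ x (ij.2 + 1)} :=
    ⟨(i, j), ⟨h1, h2, h4, h5, h6⟩, rfl⟩
  have := hb this
  omega
end

section
/- Let A = {0,1} and let ζ : A → A^q be a substitution of constant length q ≥ 2 with ζ(0) starting with 0 and ζ(0) ≠ ζ(1), and let x ∈ A^ℕ₀ be the fixed point ζ(x) = x starting with 0. Let α be the length of the longest common prefix of ζ(0), ζ(1) and β the length of the longest common suffix. If ⟨c, v, d⟩ (v a nonempty word, c,d ∈ A) is an inner line-pattern, i.e., there exist i,j ≥ 1 with x_{[i-1, i+|v|+1)} = cvd and x_{[j-1, j+|v|+1)} = c̄vd̄ (where 0̄=1, 1̄=0), then setting w = ζ(c)_{[q-β,q)} · ζ(v) · ζ(d)_{[0,α)}, a = ζ(c)_{q-β-1}, b = ζ(d)_α, the triple ⟨a, w, b⟩ is again an inner line-pattern; moreover |w| = q|v| + α + β, and whenever (i,j) witnesses ⟨c,v,d⟩,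 the pair (qi - β, qj - β) witnesses ⟨a,w,b⟩. -/
/-- Substitution of line-patterns: Let `ζ` be a binary substitution of
constant length `q ≥ 2` (here given as `ζ : Bool → ℕ → Bool`, where only the first `q`
values matter), with `ζ 0` starting with `0`, and let `x` be the fixed point starting
with `0` (so `x (k*q + t) = ζ (x k) t` for `t < q`).  Let `α`, `β` be the lengths of the
longest common prefix, resp. suffix, of `ζ 0` and `ζ 1`.  If `⟨c, v, d⟩` is an inner
line-pattern witnessed at `(i, j)` (with `c = x (i-1)`, `d = x (i+ℓ)`, `v = x_{[i,i+ℓ)}`),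
then `⟨a, w, b⟩` with `a = ζ(c)_{q-β-1}`, `b = ζ(d)_α`,
`w = ζ(c)_{[q-β,q)} ζ(v) ζ(d)_{[0,α)}` is an inner line-pattern of length `q*ℓ + α + β`
witnessed at `(q*i - β, q*j - β)`. -/
theorem stmt_4 (q : ℕ) (hq : 2 ≤ q) (ζ : Bool → ℕ → Bool) (x : ℕ → Bool)
    (hx0 : x 0 = false) (hζ0 : ζ false 0 = false)
    (hfix : ∀ k t, t < q → x (k * q + t) = ζ (x k) t)
    (α β : ℕ)
    (hα : (∀ t < α, ζ false t = ζ true t) ∧ ζ false α ≠ ζ true α)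
    (hβ : (∀ t < β, ζ false (q - 1 - t) = ζ true (q - 1 - t)) ∧
      ζ false (q - β - 1) ≠ ζ true (q - β - 1))
    (ℓ : ℕ) (hℓ : 0 < ℓ) (i j : ℕ) (hi : 1 ≤ i) (hj : 1 ≤ j)
    (hagree : ∀ h < ℓ, x (i + h) = x (j + h))
    (hc : x (j - 1) = ! x (i - 1)) (hd : x (j + ℓ) = ! x (i + ℓ)) :
    let a := ζ (x (i - 1)) (q - β - 1)
    let b := ζ (x (i + ℓ)) α
    let L := q * ℓ + α + β
    let i' := q * i - β
    let j' := q * j - β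
    (∀ h < L, x (i' + h) = x (j' + h)) ∧
    x (i' - 1) = a ∧ x (j' - 1) = ! a ∧ x (i' + L) = b ∧ x (j' + L) = ! b ∧
    (∀ h < β, x (i' + h) = ζ (x (i - 1)) (q - β + h)) ∧
    (∀ m < ℓ, ∀ t < q, x (i' + β + (m * q + t)) = ζ (x (i + m)) t) ∧
    (∀ h < α, x (i' + β + q * ℓ + h) = ζ (x (i + ℓ)) h) := by
  intro a b L i' j'
  obtain ⟨I, rfl⟩ : ∃ I, i = I + 1 := ⟨i - 1, by omega⟩
  obtain ⟨J, rfl⟩ : ∃ J, j = J + 1 := ⟨j - 1, by omega⟩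
  simp only [Nat.add_sub_cancel] at hc hd ⊢
  have hβq : β < q := by
    by_contra hb
    push_neg at hb
    have h1 := hβ.1 (q - 1) (by omega)
    have h2 := hβ.2
    have e1 : q - β - 1 = 0 := by omega
    have e2 : q - 1 - (q - 1) = 0 := by omega
    rw [e2] at h1; rw [e1] at h2; exact h2 h1
  have hαβ : α + β < q := by
    by_contra hb
    push_neg at hb
    exact hβ.2 (hα.1 (q - β - 1) (by omega))
  have flipne : ∀ (c : Bool) (p : ℕ), ζ false p ≠ ζ true p → ζ (!c) p = ! ζ c p := by
    intro c p h
    cases c <;> cases h1 : ζ false p <;> cases h2 : ζ true p <;> simp_all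
  have flipeq : ∀ (c : Bool) (p : ℕ), ζ false p = ζ true p → ζ (!c) p = ζ c p := by
    intro c p h; cases c <;> simp [h]
  have hfix' : ∀ k t, t < q → x (q * k + t) = ζ (x k) t := by
    intro k t ht; rw [mul_comm q k]; exact hfix k t ht
  have hi'def : i' = q * (I + 1) - β := rfl
  have hj'def : j' = q * (J + 1) - β := rfl
  have P1 : ∀ h, h < β → x (i' + h) = ζ (x I) (q - β + h) := by
    intro h hh
    have e1 : q * (I + 1) = q * I + q := by ring
    have e : i' + h = q * I + (q - β + h) := by omega
    rw [e, hfix' I _ (by omega)]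
  have Q1 : ∀ h, h < β → x (j' + h) = ζ (x J) (q - β + h) := by
    intro h hh
    have e1 : q * (J + 1) = q * J + q := by ring
    have e : j' + h = q * J + (q - β + h) := by omega
    rw [e, hfix' J _ (by omega)]
  have P2 : ∀ m, m < ℓ → ∀ t, t < q → x (i' + β + (m * q + t)) = ζ (x (I + 1 + m)) t := by
    intro m hm t ht
    have e1 : q * (I + 1) = q * I + q := by ring
    have e2 : q * (I + 1 + m) = q * I + q + q * m := by ring
    have e3 : m * q = q * m := by ring
    have e : i' + β + (m * q + t) = q * (I + 1 + m) + t := by omega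
    rw [e, hfix' _ _ ht]
  have Q2 : ∀ m, m < ℓ → ∀ t, t < q → x (j' + β + (m * q + t)) = ζ (x (J + 1 + m)) t := by
    intro m hm t ht
    have e1 : q * (J + 1) = q * J + q := by ring
    have e2 : q * (J + 1 + m) = q * J + q + q * m := by ring
    have e3 : m * q = q * m := by ring
    have e : j' + β + (m * q + t) = q * (J + 1 + m) + t := by omega
    rw [e, hfix' _ _ ht]
  have P3 : ∀ h, h < α → x (i' + β + q * ℓ + h) = ζ (x (I + 1 + ℓ)) h := by
    intro h hh
    have e1 : q * (I + 1) = q * I + q := by ring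
    have e2 : q * (I + 1 + ℓ) = q * I + q + q * ℓ := by ring
    have e : i' + β + q * ℓ + h = q * (I + 1 + ℓ) + h := by omega
    rw [e, hfix' _ _ (by omega)]
  have Q3 : ∀ h, h < α → x (j' + β + q * ℓ + h) = ζ (x (J + 1 + ℓ)) h := by
    intro h hh
    have e1 : q * (J + 1) = q * J + q := by ring
    have e2 : q * (J + 1 + ℓ) = q * J + q + q * ℓ := by ring
    have e : j' + β + q * ℓ + h = q * (J + 1 + ℓ) + h := by omega
    rw [e, hfix' _ _ (by omega)]
  have Si : x (i' - 1) = ζ (x I) (q - β - 1) := by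
    have e1 : q * (I + 1) = q * I + q := by ring
    have e : i' - 1 = q * I + (q - β - 1) := by omega
    rw [e, hfix' I _ (by omega)]
  have Sj : x (j' - 1) = ζ (x J) (q - β - 1) := by
    have e1 : q * (J + 1) = q * J + q := by ring
    have e : j' - 1 = q * J + (q - β - 1) := by omega
    rw [e, hfix' J _ (by omega)]
  have Ei : x (i' + L) = ζ (x (I + 1 + ℓ)) α := by
    have e1 : q * (I + 1) = q * I + q := by ring
    have e2 : q * (I + 1 + ℓ) = q * I + q + q * ℓ := by ring
    have e : i' + L = q * (I + 1 + ℓ) + α := by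
      show q * (I + 1) - β + (q * ℓ + α + β) = q * (I + 1 + ℓ) + α
      omega
    rw [e, hfix' _ _ (by omega)]
  have Ej : x (j' + L) = ζ (x (J + 1 + ℓ)) α := by
    have e1 : q * (J + 1) = q * J + q := by ring
    have e2 : q * (J + 1 + ℓ) = q * J + q + q * ℓ := by ring
    have e : j' + L = q * (J + 1 + ℓ) + α := by
      show q * (J + 1) - β + (q * ℓ + α + β) = q * (J + 1 + ℓ) + α
      omega
    rw [e, hfix' _ _ (by omega)]
  refine ⟨?_, ?_, ?_, ?_, ?_, ?_, ?_, ?_⟩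
  · intro h hh
    have hL : L = q * ℓ + α + β := rfl
    rcases lt_or_ge h β with h1 | h1
    · rw [P1 h h1, Q1 h h1, hc, flipeq]
      have := hβ.1 (β - 1 - h) (by omega)
      have e : q - 1 - (β - 1 - h) = q - β + h := by omega
      rwa [e] at this
    · rcases lt_or_ge h (β + q * ℓ) with h2 | h2
      · set s := h - β with hs
        set m := s / q with hm
        set t := s % q with ht
        have hdm : q * m + t = s := Nat.div_add_mod s q
        have htq : t < q := Nat.mod_lt _ (by omega)
        have hmℓ : m < ℓ := by
          by_contra hmm
          push_neg at hmm
          have := Nat.mul_le_mul_left q hmm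
          omega
        have emt : m * q = q * m := by ring
        have e1 : i' + h = i' + β + (m * q + t) := by omega
        have e2 : j' + h = j' + β + (m * q + t) := by omega
        rw [e1, e2, P2 m hmℓ t htq, Q2 m hmℓ t htq, hagree m hmℓ]
      · set h' := h - β - q * ℓ with hh'
        have hh'α : h' < α := by omega
        have e1 : i' + h = i' + β + q * ℓ + h' := by omega
        have e2 : j' + h = j' + β + q * ℓ + h' := by omega
        rw [e1, e2, P3 h' hh'α, Q3 h' hh'α]
        have hag : x (J + 1 + ℓ) = ! x (I + 1 + ℓ) := hd
        rw [hag, flipeq _ _ (hα.1 h' hh'α)]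
  · exact Si
  · rw [Sj, hc, flipne _ _ hβ.2]; exact rfl
  · exact Ei
  · rw [Ej, hd, flipne _ _ hα.2]
  · exact fun h hh => P1 h hh
  · exact fun m hm t ht => P2 m hm t ht
  · exact fun h hh => P3 h hh
end

section
/- Under the same setting (binary constant-length-q substitution ζ with ζ(0) starting with 0, ζ(0) ≠ ζ(1), fixed point x, α and β as defined): exactly one of four alternatives holds uniformly for all induced line-patterns: if ⟨c,v,d⟩ induces ⟨a,w,b⟩ (meaning a = ζ(c)_{q-β-1}, b = ζ(d)_α, w = ζ(c)_{[q-β,q)}ζ(v)ζ(d)_{[0,α)}), then (a,b) equals (c,d), or (c,d̄), or (c̄,d), or (c̄,d̄), and which of the four cases occurs depends only on ζ (specifically on the values ζ(0)_{q-β-1} and ζ(0)_α), not on the line-pattern. -/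
/-- On induced separators: For a binary constant-length-`q` substitution
`ζ` with `ζ 0` starting with `0` and `ζ 0 ≠ ζ 1`, with `α`, `β` the lengths of the longest
common prefix/suffix of `ζ 0`, `ζ 1`: exactly one of four alternatives holds uniformly.
If `⟨c,v,d⟩` induces `⟨a,w,b⟩` then `a = ζ(c)_{q-β-1}` and `b = ζ(d)_α`; the four cases
`(a,b) = (c,d), (c,¬d), (¬c,d), (¬c,¬d)` are expressed by the relations below, which
depend only on `ζ` and not on the line-pattern. -/
theorem stmt_5 (q : ℕ) (hq : 2 ≤ q) (ζ : Bool → ℕ → Bool)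
    (hζ0 : ζ false 0 = false)
    (α β : ℕ)
    (hα : (∀ t < α, ζ false t = ζ true t) ∧ ζ false α ≠ ζ true α)
    (hβ : (∀ t < β, ζ false (q - 1 - t) = ζ true (q - 1 - t)) ∧
      ζ false (q - β - 1) ≠ ζ true (q - β - 1)) :
    let P1 := ∀ c d : Bool, ζ c (q - β - 1) = c ∧ ζ d α = d
    let P2 := ∀ c d : Bool, ζ c (q - β - 1) = c ∧ ζ d α = !d
    let P3 := ∀ c d : Bool, ζ c (q - β - 1) = !c ∧ ζ d α = d
    let P4 := ∀ c d : Bool, ζ c (q - β - 1) = !c ∧ ζ d α = !d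
    (P1 ∨ P2 ∨ P3 ∨ P4) ∧
    (P1 → ¬P2 ∧ ¬P3 ∧ ¬P4) ∧ (P2 → ¬P1 ∧ ¬P3 ∧ ¬P4) ∧
    (P3 → ¬P1 ∧ ¬P2 ∧ ¬P4) ∧ (P4 → ¬P1 ∧ ¬P2 ∧ ¬P3) := by
  obtain ⟨-, h1⟩ := hα
  obtain ⟨-, h2⟩ := hβ
  have e1 : ζ true α = !ζ false α := by
    cases h : ζ false α <;> cases h' : ζ true α <;> simp_all
  have e2 : ζ true (q - β - 1) = !ζ false (q - β - 1) := by
    cases h : ζ false (q - β - 1) <;> cases h' : ζ true (q - β - 1) <;> simp_all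
  intro P1 P2 P3 P4
  refine ⟨?_, ?_, ?_, ?_, ?_⟩
  · cases hA : ζ false (q - β - 1) <;> cases hB : ζ false α
    · left; rintro (_|_) (_|_) <;> simp_all
    · right; left; rintro (_|_) (_|_) <;> simp_all
    · right; right; left; rintro (_|_) (_|_) <;> simp_all
    · right; right; right; rintro (_|_) (_|_) <;> simp_all
  all_goals
    refine fun h => ⟨fun h' => ?_, fun h' => ?_, fun h' => ?_⟩ <;>
      · have a := (h false false); have b := (h' false false); simp_all
end

section
/- Let P', Q' and P, Q be inner line-patterns of a binary uniform substitution ζ (injective on letters) such that P' induces P and Q' induces Q. Then P = Q if and only if P' = Q'. -/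
/-- The word `w` occurs in `x` at index `i`. -/
def OccursAt (x : ℕ → Bool) (w : List Bool) (i : ℕ) : Prop :=
  ∀ t, t < w.length → x (i + t) = w.getD t false

/-- `(i, j)` is a witnessing pair of the inner line-pattern `⟨a, w, b⟩` in `x`. -/
def Witness (x : ℕ → Bool) (a : Bool) (w : List Bool) (b : Bool) (i j : ℕ) : Prop :=
  1 ≤ i ∧ 1 ≤ j ∧ x (i - 1) = a ∧ x (j - 1) = !a ∧
    OccursAt x w i ∧ OccursAt x w j ∧
    x (i + w.length) = b ∧ x (j + w.length) = !b

/-- `⟨a, w, b⟩` is an inner line-pattern of `x`. -/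
def IsInnerLinePattern (x : ℕ → Bool) (a : Bool) (w : List Bool) (b : Bool) : Prop :=
  w ≠ [] ∧ ∃ i j, Witness x a w b i j

/-- `⟨c, v, d⟩` induces `⟨a, w, b⟩`. -/
def Induces (q α β : ℕ) (ζ : Bool → List Bool)
    (c : Bool) (v : List Bool) (d : Bool)
    (a : Bool) (w : List Bool) (b : Bool) : Prop :=
  a = (ζ c).getD (q - β - 1) false ∧ b = (ζ d).getD α false ∧
    w = (ζ c).drop (q - β) ++ (v.flatMap ζ) ++ (ζ d).take α

lemma flatMap_inj_aux (q : ℕ) (hq : 0 < q) (ζ : Bool → List Bool)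
    (hlen : ∀ c, (ζ c).length = q) (hne : ζ false ≠ ζ true) :
    ∀ v v₂ : List Bool, v.flatMap ζ = v₂.flatMap ζ → v = v₂ := by
  intro v
  induction v with
  | nil =>
    intro v₂ h
    cases v₂ with
    | nil => rfl
    | cons e t =>
      exfalso
      have := congrArg List.length h
      simp [List.flatMap_cons, hlen] at this
      omega
  | cons e t ih =>
    intro v₂ h
    cases v₂ with
    | nil =>
      exfalso
      have := congrArg List.length h
      simp [List.flatMap_cons, hlen] at this
      omega
    | cons e₂ t₂ =>
      simp only [List.flatMap_cons] at h
      have hlen' : (ζ e).length = (ζ e₂).length := by rw [hlen, hlen]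
      obtain ⟨h1, h2⟩ := List.append_inj h hlen'
      have he : e = e₂ := by
        cases e <;> cases e₂ <;> simp_all
      rw [he, ih t₂ h2]

/-- If `P'` induces `P` and `Q'` induces `Q` (all inner line-patterns of the
fixed point `x` of a binary uniform substitution `ζ` injective on letters), then `P = Q`
iff `P' = Q'`. -/
theorem stmt_8 (q : ℕ) (hq : 2 ≤ q) (ζ : Bool → List Bool)
    (hlen : ∀ c, (ζ c).length = q)
    (hne : ζ false ≠ ζ true)
    (x : ℕ → Bool)
    (α β : ℕ)
    (hα : (∀ t < α, (ζ false).getD t false = (ζ true).getD t false) ∧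
      (ζ false).getD α false ≠ (ζ true).getD α false)
    (hβ : (∀ t < β, (ζ false).getD (q - 1 - t) false = (ζ true).getD (q - 1 - t) false) ∧
      (ζ false).getD (q - β - 1) false ≠ (ζ true).getD (q - β - 1) false)
    (c : Bool) (v : List Bool) (d : Bool) (a : Bool) (w : List Bool) (b : Bool)
    (c₂ : Bool) (v₂ : List Bool) (d₂ : Bool) (a₂ : Bool) (w₂ : List Bool) (b₂ : Bool)
    (hP' : IsInnerLinePattern x c v d) (hQ' : IsInnerLinePattern x c₂ v₂ d₂)
    (hP : IsInnerLinePattern x a w b) (hQ : IsInnerLinePattern x a₂ w₂ b₂)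
    (h1 : Induces q α β ζ c v d a w b) (h2 : Induces q α β ζ c₂ v₂ d₂ a₂ w₂ b₂) :
    (a = a₂ ∧ w = w₂ ∧ b = b₂) ↔ (c = c₂ ∧ v = v₂ ∧ d = d₂) := by
  obtain ⟨ha1, hb1, hw1⟩ := h1
  obtain ⟨ha2, hb2, hw2⟩ := h2
  constructor
  · rintro ⟨hA, hW, hB⟩
    have hc : c = c₂ := by
      rw [ha1, ha2] at hA
      cases c <;> cases c₂ <;> simp_all
    have hd : d = d₂ := by
      rw [hb1, hb2] at hB
      cases d <;> cases d₂ <;> simp_all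
    refine ⟨hc, ?_, hd⟩
    rw [hw1, hw2, hc, hd] at hW
    have h1 : ((ζ c₂).drop (q - β)).length = ((ζ c₂).drop (q - β)).length := rfl
    rw [List.append_assoc, List.append_assoc] at hW
    have hmid := (List.append_right_injective _) hW
    have hflat : v.flatMap ζ = v₂.flatMap ζ :=
      (List.append_left_injective _) hmid
    exact flatMap_inj_aux q (by omega) ζ hlen hne v v₂ hflat
  · rintro ⟨hc, hv, hd⟩
    subst hc; subst hv; subst hd
    rw [ha1, ha2, hb1, hb2, hw1, hw2]
    exact ⟨rfl, rfl, rfl⟩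
end

section
/- Let q ≥ 2 and ζ be the non-primitive binary constant-length-q substitution with ζ(1) = 1^q and ζ(0) starting with 0, containing the letter 1 and at least one more 0. Let x = ζ^∞(0). Then for every ℓ ∈ ℕ, the triple ⟨0, 1^ℓ, 1⟩ is an inner line-pattern of x with infinitely many witnessing pairs: there are infinitely many pairs (i,j) ∈ ℕ² with x_{[i−1, i+ℓ+1)} = 0·1^ℓ·1 and x_{[j−1, j+ℓ+1)} = 1·1^ℓ·0. -/
/-!
Since `ζ(1) = 1^q`, the image `ζ^k` of every `1` in `x` is the block `1^{q^k}`, while the image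
of every `0` starts with `0`. Take a transition `01` at positions `a, a + 1` and a transition `10`
at `b, b + 1` of `x` (they exist because `ζ(0)` starts with `0`, contains `1`, and contains a
second `0`). For `q^k > ℓ`, the last `0` before the block `ζ^k(x_{a+1})` is followed by
`1^{ℓ+1}`, and the block `ζ^k(x_b)` ends with `1^{ℓ+1}` and is followed by `0`; letting `k`
grow gives infinitely many of the latter.
-/

/-- The default `d` is never read when every `ζ c` has length `q`. -/
def IsSubstFixedPoint {α : Type*} (q : ℕ) (ζ : α → List α) (d : α) (x : ℕ → α) : Prop :=
  ∀ k t, t < q → x (k * q + t) = (ζ (x k)).getD t d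

theorem exists_eq_and_succ_ne {α : Type*} {x : ℕ → α} {c : α} {u v : ℕ} (huv : u ≤ v)
    (hu : x u = c) (hv : x v ≠ c) : ∃ a, x a = c ∧ x (a + 1) ≠ c := by
  by_contra! hstep
  have hconst : ∀ n, x (u + n) = c := fun n => by
    induction n with
    | zero => exact hu
    | succ n ih => exact hstep _ ih
  exact hv (by simpa [Nat.add_sub_cancel' huv] using hconst (v - u))

theorem exists_ne_and_run_of_lt {α : Type*} {x : ℕ → α} {c : α} {u w ℓ : ℕ} (hu : x u ≠ c)
    (huw : u < w) (hrun : ∀ h ≤ ℓ, x (w + h) = c) :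
    ∃ i, u < i ∧ x (i - 1) ≠ c ∧ ∀ h ≤ ℓ, x (i + h) = c := by
  induction w with
  | zero => omega
  | succ w ih =>
    by_cases hw : x w = c
    · have huw' : u < w := lt_of_le_of_ne (Nat.lt_succ_iff.mp huw) (by rintro rfl; exact hu hw)
      refine ih huw' fun h hh => ?_
      rcases h with _ | h
      · exact hw
      · simpa [← Nat.add_assoc, Nat.add_right_comm] using hrun h (by omega)
    · exact ⟨w + 1, huw, hw, hrun⟩

theorem List.exists_pos_getD_eq_of_two_le_count {α : Type*} [BEq α] [LawfulBEq α] {l : List α}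
    {c : α} (d : α) (hl : 2 ≤ l.count c) : ∃ s, 0 < s ∧ s < l.length ∧ l.getD s d = c := by
  obtain _ | ⟨b, l⟩ := l
  · simp at hl
  · have hc : c ∈ l := by
      rw [← List.count_pos_iff, List.count_cons] at *
      split_ifs at hl <;> omega
    obtain ⟨s, hs, rfl⟩ := List.mem_iff_getElem.mp hc
    exact ⟨s + 1, by omega, by simpa using hs, by simp [hs]⟩

namespace IsSubstFixedPoint

variable {α : Type*} {q : ℕ} {ζ : α → List α} {d : α} {x : ℕ → α}

theorem mul_pow_add_eq_of_replicate (hx : IsSubstFixedPoint q ζ d x) {c : α}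
    (hζ : ζ c = List.replicate q c) {m : ℕ} (hm : x m = c) {k t : ℕ} (ht : t < q ^ k) :
    x (m * q ^ k + t) = c := by
  induction k generalizing t with
  | zero => simp_all
  | succ k ih =>
    have hq : 0 < q := Nat.pos_of_ne_zero (by rintro rfl; simp at ht)
    have hsplit : m * q ^ (k + 1) + t = (m * q ^ k + t / q) * q + t % q := by
      have := Nat.div_add_mod t q
      rw [pow_succ]
      linarith
    have hdiv : t / q < q ^ k := Nat.div_lt_of_lt_mul (by rwa [← pow_succ'])
    rw [hsplit, hx _ _ (Nat.mod_lt _ hq), ih hdiv, hζ, List.getD_replicate _ (Nat.mod_lt _ hq)]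

theorem mul_pow_eq (hx : IsSubstFixedPoint q ζ d x) (hq : 0 < q) {c : α}
    (hζ : (ζ c).getD 0 d = c) {m : ℕ} (hm : x m = c) (k : ℕ) : x (m * q ^ k) = c := by
  induction k with
  | zero => simpa using hm
  | succ k ih => rw [pow_succ, ← mul_assoc, ← Nat.add_zero (_ * q), hx _ _ hq, ih, hζ]

theorem eq_getD_of_lt (hx : IsSubstFixedPoint q ζ d x) {t : ℕ} (ht : t < q) :
    x t = (ζ (x 0)).getD t d := by
  simpa using hx 0 t ht

end IsSubstFixedPoint

namespace IsSubstFixedPoint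

variable {q : ℕ} {ζ : Bool → List Bool} {x : ℕ → Bool}

theorem exists_left_witness (hx : IsSubstFixedPoint q ζ false x) (hq : 1 < q)
    (hζ1 : ζ true = List.replicate q true) (hζ0 : (ζ false).getD 0 false = false) {a : ℕ}
    (ha : x a = false) (ha1 : x (a + 1) = true) (ℓ : ℕ) :
    ∃ i, 1 ≤ i ∧ x (i - 1) = false ∧ (∀ h < ℓ, x (i + h) = true) ∧ x (i + ℓ) = true := by
  have hℓ : ℓ < q ^ ℓ := Nat.lt_pow_self hq
  obtain ⟨i, hi, hi0, hrun⟩ := exists_ne_and_run_of_lt (c := true) (w := (a + 1) * q ^ ℓ) (ℓ := ℓ)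
    (by simpa using hx.mul_pow_eq (by omega) hζ0 ha ℓ)
    (Nat.mul_lt_mul_of_pos_right (Nat.lt_succ_self a) (by positivity))
    (fun h hh => hx.mul_pow_add_eq_of_replicate hζ1 ha1 (t := h) (by omega))
  exact ⟨i, by omega, by simpa using hi0, fun h hh => hrun h hh.le, hrun ℓ le_rfl⟩

theorem exists_right_witness_gt (hx : IsSubstFixedPoint q ζ false x) (hq : 1 < q)
    (hζ1 : ζ true = List.replicate q true) (hζ0 : (ζ false).getD 0 false = false) {b : ℕ}
    (hb : x b = true) (hb1 : x (b + 1) = false) (ℓ N : ℕ) :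
    ∃ j, N < j ∧ 1 ≤ j ∧ x (j - 1) = true ∧ (∀ h < ℓ, x (j + h) = true) ∧ x (j + ℓ) = false := by
  set k := N + ℓ + 1
  have hk : k < q ^ k := Nat.lt_pow_self hq
  have hblock : ∀ t < q ^ k, x (b * q ^ k + t) = true := fun t ht =>
    hx.mul_pow_add_eq_of_replicate hζ1 hb ht
  have hend : x (b * q ^ k + q ^ k) = false := by
    simpa [add_mul] using hx.mul_pow_eq (by omega) hζ0 hb1 k
  refine ⟨b * q ^ k + (q ^ k - ℓ), by omega, by omega, ?_, fun h hh => ?_, ?_⟩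
  · rw [show b * q ^ k + (q ^ k - ℓ) - 1 = b * q ^ k + (q ^ k - ℓ - 1) by omega]
    exact hblock _ (by omega)
  · rw [add_assoc]
    exact hblock _ (by omega)
  · rwa [add_assoc, Nat.sub_add_cancel (by omega)]

end IsSubstFixedPoint

/-- Let `q ≥ 2` and let `ζ` be the non-primitive binary constant-length-`q`
substitution with `ζ(1) = 1^q` and `ζ(0)` starting with `0`, containing the letter `1`
and at least one further `0` (so `ζ(0)` contains at least two `0`s).  Let
`x = ζ^∞(0)` be the fixed point.  Then for every `ℓ ≥ 1`, the triple `⟨0, 1^ℓ, 1⟩` is an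
inner line-pattern with infinitely many witnessing pairs `(i,j)`: infinitely many pairs
with `x_{[i-1, i+ℓ+1)} = 0·1^ℓ·1` and `x_{[j-1, j+ℓ+1)} = 1·1^ℓ·0`. -/
theorem stmt_14 (q : ℕ) (hq : 2 ≤ q) (ζ : Bool → List Bool)
    (hlen : ∀ c, (ζ c).length = q)
    (hζ1 : ζ true = List.replicate q true)
    (hζ00 : (ζ false).getD 0 false = false)
    (h1in : true ∈ ζ false)
    (h2zeros : 2 ≤ (ζ false).count false)
    (x : ℕ → Bool) (hx0 : x 0 = false)
    (hfix : ∀ k t, t < q → x (k * q + t) = (ζ (x k)).getD t false) :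
    ∀ ℓ : ℕ, 1 ≤ ℓ →
      {ij : ℕ × ℕ | 1 ≤ ij.1 ∧ 1 ≤ ij.2 ∧
        x (ij.1 - 1) = false ∧ (∀ h < ℓ, x (ij.1 + h) = true) ∧ x (ij.1 + ℓ) = true ∧
        x (ij.2 - 1) = true ∧ (∀ h < ℓ, x (ij.2 + h) = true) ∧
        x (ij.2 + ℓ) = false}.Infinite := by
  intro ℓ _
  have hx : IsSubstFixedPoint q ζ false x := hfix
  obtain ⟨n, hn, hn1⟩ := List.mem_iff_getElem.mp h1in
  have hxn : x n = true := by
    rw [hx.eq_getD_of_lt (hlen false ▸ hn), hx0, List.getD_eq_getElem _ _ hn, hn1]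
  obtain ⟨s, hs, hsq, hs0⟩ := (ζ false).exists_pos_getD_eq_of_two_le_count false h2zeros
  have hxs : x (s * q ^ n) = false :=
    hx.mul_pow_eq (by omega) hζ00 (by rw [hx.eq_getD_of_lt (hlen false ▸ hsq), hx0, hs0]) n
  have hns : n ≤ s * q ^ n := (Nat.lt_pow_self hq).le.trans (Nat.le_mul_of_pos_left _ hs)
  obtain ⟨a, ha, ha1⟩ := exists_eq_and_succ_ne (Nat.zero_le n) hx0 (by simp [hxn])
  obtain ⟨b, hb, hb1⟩ := exists_eq_and_succ_ne hns hxn (by simp [hxs])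
  obtain ⟨i, hi1, hi0, hirun, hiend⟩ :=
    hx.exists_left_witness hq hζ1 hζ00 ha (by simpa using ha1) ℓ
  refine Set.infinite_of_not_bddAbove ?_
  rintro ⟨⟨_, N⟩, hN⟩
  obtain ⟨j, hNj, hj1, hj0, hjrun, hjend⟩ :=
    hx.exists_right_witness_gt hq hζ1 hζ00 hb (by simpa using hb1) ℓ N
  exact hNj.not_ge (hN (a := (i, j)) ⟨hi1, hj1, hi0, hirun, hiend, hj0, hjrun, hjend⟩).2
end

section
/- Let q ≥ 2 and ζ be a q-uniform binary substitution with ζ(0) starting with 0 and ζ(0) ≠ ζ(1), with fixed point x. If w is a nonempty subword of x, i is an occurrence index of w (x_{[i,i+|w|)} = w), and p_i := i mod q satisfies p_i + |w| ≥ q, then there exists a 1-cutting of w at index i; moreover, for two occurrence indices i, i' with p_i + |w| ≥ q and p_{i'} + |w| ≥ q, the resulting 1-cuttings coincide if and only if p_i = p_{i'}. -/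
/-- A 1-cutting at index `i` of the length-`ℓ` subword of `x` starting at `i`, for a
`q`-uniform substitution `ζ` with fixed point `x`; `sLen` records the length of the
initial piece `s` (a proper suffix of `ζ (x (j-1))`, empty when `j = 0`), so the cutting
is the tuple `[s, ζ(x_j), …, ζ(x_{j+k-1}), t]` with `t` a proper prefix of `ζ (x (j+k))`;
the last clause is the alignment of the cutting bars `E₁ = qℕ₀` in `[i, i+ℓ)` with those
in `[l, l+ℓ)`, `l = q·j − sLen`. -/
def OneCuttingAt (q : ℕ) (ζ : Bool → List Bool) (x : ℕ → Bool) (i ℓ sLen : ℕ) : Prop :=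
  ∃ j k tLen : ℕ,
    sLen + k * q + tLen = ℓ ∧ sLen < q ∧ tLen < q ∧
    (j = 0 → sLen = 0) ∧
    (sLen ≠ 0 → 1 ≤ j ∧
      ∀ t', t' < sLen → x (i + t') = (ζ (x (j - 1))).getD (q - sLen + t') false) ∧
    (∀ h, h < k → ∀ t', t' < q →
      x (i + sLen + h * q + t') = (ζ (x (j + h))).getD t' false) ∧
    (∀ t', t' < tLen → x (i + sLen + k * q + t') = (ζ (x (j + k))).getD t' false) ∧
    (∀ e : ℤ, ((i : ℤ) ≤ e ∧ e < (i : ℤ) + ℓ ∧ (q : ℤ) ∣ e) ↔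
      ((i : ℤ) ≤ e ∧ e < (i : ℤ) + ℓ ∧ (q : ℤ) ∣ (e - i + ((q : ℤ) * j - sLen))))

theorem Nat.exists_lt_le_dvd_add {q i ℓ : ℕ} (hq : 0 < q) (hge : q ≤ i % q + ℓ) :
    ∃ s < q, s ≤ ℓ ∧ q ∣ i + s := by
  have hdiv := Nat.div_add_mod i q
  have hlt := Nat.mod_lt i hq
  rcases Nat.eq_zero_or_pos (i % q) with h0 | hpos
  · exact ⟨0, hq, Nat.zero_le _, by simpa using Nat.dvd_of_mod_eq_zero h0⟩
  · exact ⟨q - i % q, by omega, by omega, i / q + 1, by rw [mul_add]; omega⟩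

theorem Nat.eq_of_lt_of_dvd_add {q i s s' : ℕ} (hs : s < q) (hs' : s' < q)
    (h : q ∣ i + s) (h' : q ∣ i + s') : s = s' :=
  Nat.ModEq.eq_of_lt_of_lt (Nat.ModEq.add_left_cancel' i
    ((Nat.modEq_zero_iff_dvd.2 h).trans (Nat.modEq_zero_iff_dvd.2 h').symm)) hs hs'

theorem Nat.eq_iff_mod_eq_of_dvd_add {q i i' s s' : ℕ} (hs : s < q) (hs' : s' < q)
    (h : q ∣ i + s) (h' : q ∣ i' + s') : s = s' ↔ i % q = i' % q := by
  constructor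
  · rintro rfl
    exact Nat.ModEq.add_right_cancel' s
      ((Nat.modEq_zero_iff_dvd.2 h).trans (Nat.modEq_zero_iff_dvd.2 h').symm)
  · intro hii'
    have h'' : q ∣ i' + s :=
      Nat.modEq_zero_iff_dvd.1 ((Nat.ModEq.add_right s hii').symm.trans
        (Nat.modEq_zero_iff_dvd.2 h))
    exact Nat.eq_of_lt_of_dvd_add hs hs' h'' h'

theorem oneCuttingAt_of_dvd_add {q : ℕ} {ζ : Bool → List Bool} {x : ℕ → Bool}
    (hfix : ∀ k t, t < q → x (k * q + t) = (ζ (x k)).getD t false) {i ℓ s : ℕ}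
    (hs : s < q) (hsℓ : s ≤ ℓ) (hdvd : q ∣ i + s) : OneCuttingAt q ζ x i ℓ s := by
  obtain ⟨j, hj⟩ := hdvd
  have hq : 0 < q := by omega
  have hk := Nat.div_add_mod' (ℓ - s) q
  refine ⟨j, (ℓ - s) / q, (ℓ - s) % q, by omega, hs, Nat.mod_lt _ hq, ?_, ?_, ?_, ?_, ?_⟩
  · rintro rfl
    omega
  · intro hs0
    have hj0 : j ≠ 0 := by
      rintro rfl
      omega
    obtain ⟨j, rfl⟩ := Nat.exists_eq_add_one_of_ne_zero hj0
    refine ⟨by omega, fun t ht => ?_⟩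
    rw [Nat.add_sub_cancel, show i + t = j * q + (q - s + t) by
      rw [mul_add, mul_one] at hj; rw [mul_comm]; omega]
    exact hfix _ _ (by omega)
  · intro h _ t ht
    rw [show i + s + h * q + t = (j + h) * q + t by rw [add_mul, mul_comm j q]; omega]
    exact hfix _ _ ht
  · intro t ht
    rw [show i + s + (ℓ - s) / q * q + t = (j + (ℓ - s) / q) * q + t by
      rw [add_mul, mul_comm j q]; omega]
    exact hfix _ _ (ht.trans (Nat.mod_lt _ hq))
  · have hij : (q : ℤ) * j - s = i := by
      rw [← Nat.cast_mul, ← hj]; push_cast; ring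
    intro e
    rw [hij, sub_add_cancel]

theorem OneCuttingAt.lt {q : ℕ} {ζ : Bool → List Bool} {x : ℕ → Bool} {i ℓ s : ℕ}
    (h : OneCuttingAt q ζ x i ℓ s) : s < q := by
  obtain ⟨-, -, -, -, hs, -⟩ := h
  exact hs

theorem OneCuttingAt.dvd_add {q : ℕ} {ζ : Bool → List Bool} {x : ℕ → Bool} {i ℓ s : ℕ}
    (h : OneCuttingAt q ζ x i ℓ s) (hge : q ≤ i % q + ℓ) : q ∣ i + s := by
  obtain ⟨j, k, tLen, hsum, hs, -, -, -, -, -, halign⟩ := h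
  have bar_iff : ∀ e : ℤ, i ≤ e → e < i + ℓ → ((q : ℤ) ∣ e ↔ (q : ℤ) ∣ e - (i + s)) := by
    intro e he₁ he₂
    have := halign e
    simp only [he₁, he₂, true_and] at this
    rw [this, show e - i + (q * j - s) = e - (i + s) + q * j by ring]
    exact dvd_add_left (dvd_mul_right _ _)
  obtain ⟨s₀, -, hs₀ℓ, hdvd₀⟩ := Nat.exists_lt_le_dvd_add (by omega) hge
  rcases hs₀ℓ.lt_or_eq with hlt | rfl
  · have hbar := (bar_iff (i + s₀) (by omega) (by omega)).1 (by exact_mod_cast hdvd₀)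
    have hdiff : (q : ℤ) ∣ (i + s₀) - ((i + s₀) - (i + s)) :=
      dvd_sub (by exact_mod_cast hdvd₀) hbar
    rw [sub_sub_cancel] at hdiff
    exact_mod_cast hdiff
  · rcases (show s ≤ s₀ by omega).lt_or_eq with hlt | rfl
    · exact_mod_cast (bar_iff (i + s) (by omega) (by omega)).2 (by simp)
    · exact hdvd₀

theorem stmt_18_general (q : ℕ) (hq : 2 ≤ q) (ζ : Bool → List Bool)
    (x : ℕ → Bool)
    (hfix : ∀ k t, t < q → x (k * q + t) = (ζ (x k)).getD t false)
    (w : List Bool) :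
    (∀ i, OccursAt x w i → q ≤ i % q + w.length →
      ∃ sLen, OneCuttingAt q ζ x i w.length sLen) ∧
    (∀ i i', OccursAt x w i → OccursAt x w i' →
      q ≤ i % q + w.length → q ≤ i' % q + w.length →
      ∀ sLen sLen', OneCuttingAt q ζ x i w.length sLen →
        OneCuttingAt q ζ x i' w.length sLen' →
        (sLen = sLen' ↔ i % q = i' % q)) := by
  refine ⟨fun i _ hge => ?_, fun i i' _ _ hge hge' s s' h h' => ?_⟩
  · obtain ⟨s, hs, hsℓ, hdvd⟩ := Nat.exists_lt_le_dvd_add (by omega) hge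
    exact ⟨s, oneCuttingAt_of_dvd_add hfix hs hsℓ hdvd⟩
  · exact Nat.eq_iff_mod_eq_of_dvd_add h.lt h'.lt (h.dvd_add hge) (h'.dvd_add hge')

/-- Let `ζ` be a `q`-uniform binary substitution (`q ≥ 2`) with `ζ 0`
starting with `0` and `ζ 0 ≠ ζ 1`, with fixed point `x`, and let `w` be a nonempty
subword of `x`.  If `i` is an occurrence index of `w` with `(i % q) + |w| ≥ q`, then
there is a 1-cutting of `w` at `i`; moreover, for occurrence indices `i, i'` with
`(i % q) + |w| ≥ q` and `(i' % q) + |w| ≥ q`, the corresponding 1-cuttings coincide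
(equal initial-piece lengths, hence equal tuples of words) iff `i % q = i' % q`. -/
theorem stmt_18 (q : ℕ) (hq : 2 ≤ q) (ζ : Bool → List Bool)
    (hlen : ∀ c, (ζ c).length = q)
    (hne : ζ false ≠ ζ true)
    (hζ00 : (ζ false).getD 0 false = false)
    (x : ℕ → Bool) (hx0 : x 0 = false)
    (hfix : ∀ k t, t < q → x (k * q + t) = (ζ (x k)).getD t false)
    (w : List Bool) (hwne : w ≠ []) :
    (∀ i, OccursAt x w i → q ≤ i % q + w.length →
      ∃ sLen, OneCuttingAt q ζ x i w.length sLen) ∧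
    (∀ i i', OccursAt x w i → OccursAt x w i' →
      q ≤ i % q + w.length → q ≤ i' % q + w.length →
      ∀ sLen sLen', OneCuttingAt q ζ x i w.length sLen →
        OneCuttingAt q ζ x i' w.length sLen' →
        (sLen = sLen' ↔ i % q = i' % q)) :=
  stmt_18_general q hq ζ x hfix w
end
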